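/- arXiv:1911.12464 — 7 statements merged into one kernel-verified Lean document; each statement's English description precedes it below -/
import Mathlib

section
/- Let S be a finite set of palindromes over a finite alphabet Σ, and let ℓ be the maximum length of a word in S. Then the language C_Σ(S) = { x ∈ Σ* : every palindromic factor of x lies in S } coincides with the complement of the union, over all palindromes t of length at most ℓ+2 not in S, of Σ* t Σ*. In particular, C_Σ(S) is a regular language. -/
/-!
A palindromic factor of `x` that is not in `S` but longer than `ℓ + 2` can be trimmed
symmetrically, one letter at each end, to a palindromic factor of length `ℓ + 1` or `ℓ + 2`;
that one is still not in `S`, since every word of `S` has length at most `ℓ`. Hence `C_Σ(S)` is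
exactly the set of words avoiding a set of factors of length at most `ℓ + 2`. Such a language
is regular by Myhill–Nerode: once a word avoids the forbidden factors, its left quotient depends
only on its last `ℓ + 2` letters.
-/

def IsFactor {α : Type*} (y x : List α) : Prop := ∃ u v, x = u ++ y ++ v

def IsPal {α : Type*} (y : List α) : Prop := y.reverse = y

/-- The language of words all of whose palindromic factors lie in `S`. -/
def CLang {α : Type*} (S : Finset (List α)) : Language α :=
  {x | ∀ y, IsFactor y x → IsPal y → y ∈ S}

namespace List

variable {α : Type*}

theorem rtake_append_infix_append (x y : List α) (n : ℕ) : x.rtake n ++ y <:+: x ++ y :=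
  ⟨x.take (x.length - n), [], by rw [rtake, ← append_assoc, take_append_drop, append_nil]⟩

theorem infix_append_or_infix_rtake_append {t x y : List α} {n : ℕ} (ht : t.length ≤ n)
    (h : t <:+: x ++ y) : t <:+: x ∨ t <:+: x.rtake n ++ y := by
  rcases infix_append_iff.mp h with hx | hy | ⟨t₁, t₂, rfl, h₁, h₂⟩
  · exact Or.inl hx
  · exact Or.inr (infix_append_of_infix_right hy)
  · have h₁' : t₁ <:+ x.rtake n := by
      refine suffix_of_suffix_length_le h₁ (drop_suffix _ _) ?_
      have := h₁.length_le
      simp only [length_append] at ht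
      simp only [rtake, length_drop]
      omega
    exact Or.inr (infix_append_iff.mpr (Or.inr (Or.inr ⟨t₁, t₂, rfl, h₁', h₂⟩)))

theorem Palindrome.exists_infix_length_between {y : List α} (hy : y.Palindrome) {m : ℕ}
    (hm : m ≤ y.length) :
    ∃ t, t.Palindrome ∧ t <:+: y ∧ m ≤ t.length ∧ t.length ≤ m + 1 := by
  induction hy with
  | nil => exact ⟨[], .nil, infix_rfl, hm, by simp⟩
  | singleton a => exact ⟨[a], .singleton a, infix_rfl, hm, by simp_all⟩
  | @cons_concat a l hl ih =>
    by_cases hshort : l.length + 2 ≤ m + 1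
    · exact ⟨_, hl.cons_concat a, infix_rfl, hm, by simpa using hshort⟩
    · obtain ⟨t, ht, hinf, hlen⟩ := ih (by omega)
      exact ⟨t, ht, hinf.trans (infix_cons infix_append_left), hlen⟩

end List

namespace Language

variable {α : Type*} {F : Set (List α)} {n : ℕ}

def avoiding (F : Set (List α)) : Language α := {x | ∀ t ∈ F, ¬ t <:+: x}

theorem mem_avoiding {x : List α} : x ∈ avoiding F ↔ ∀ t ∈ F, ¬ t <:+: x := Iff.rfl

theorem leftQuotient_avoiding_of_notMem {x : List α} (hx : x ∉ avoiding F) :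
    (avoiding F).leftQuotient x = 0 := by
  obtain ⟨t, ht, hinf⟩ : ∃ t ∈ F, t <:+: x := by simpa [mem_avoiding] using hx
  ext y
  exact iff_of_false (fun h => h t ht (hinf.trans List.infix_append_left)) (notMem_zero y)

theorem leftQuotient_avoiding_eq_rtake (hF : ∀ t ∈ F, t.length ≤ n) {x : List α}
    (hx : x ∈ avoiding F) :
    (avoiding F).leftQuotient x = (avoiding F).leftQuotient (x.rtake n) := by
  ext y
  simp only [mem_leftQuotient, mem_avoiding]
  refine ⟨fun h t ht hinf => h t ht (hinf.trans (x.rtake_append_infix_append y n)),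
    fun h t ht hinf => ?_⟩
  exact (List.infix_append_or_infix_rtake_append (hF t ht) hinf).elim (hx t ht) (h t ht)

theorem isRegular_avoiding [Finite α] (hF : ∀ t ∈ F, t.length ≤ n) :
    (avoiding F).IsRegular := by
  refine .of_finite_range_leftQuotient <|
    ((List.finite_length_le α n).image (avoiding F).leftQuotient).insert 0 |>.subset ?_
  rintro _ ⟨x, rfl⟩
  by_cases hx : x ∈ avoiding F
  · have hlen : (x.rtake n).length ≤ n := by simp only [List.rtake, List.length_drop]; omega
    exact Or.inr ⟨x.rtake n, hlen, (leftQuotient_avoiding_eq_rtake hF hx).symm⟩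
  · exact Or.inl (leftQuotient_avoiding_of_notMem hx)

end Language

theorem isFactor_iff_infix {α : Type*} {y x : List α} : IsFactor y x ↔ y <:+: x :=
  ⟨fun ⟨u, v, h⟩ => ⟨u, v, h.symm⟩, fun ⟨u, v, h⟩ => ⟨u, v, h.symm⟩⟩

theorem isPal_iff_palindrome {α : Type*} {y : List α} : IsPal y ↔ y.Palindrome :=
  List.Palindrome.iff_reverse_eq.symm

theorem avoiding_eq_compl_iUnion {α : Type*} (F : Set (List α)) :
    (Language.avoiding F : Set (List α)) = (⋃ t ∈ F, {x | IsFactor t x})ᶜ := by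
  refine Set.ext fun x => ?_
  simp only [Set.mem_compl_iff, Set.mem_iUnion, isFactor_iff_infix, not_exists]
  exact Language.mem_avoiding

theorem cLang_eq_avoiding {α : Type*} (S : Finset (List α)) {ℓ : ℕ}
    (hℓ : ∀ s ∈ S, s.length ≤ ℓ) :
    CLang S = Language.avoiding {t | IsPal t ∧ t.length ≤ ℓ + 2 ∧ t ∉ S} := by
  ext x
  refine ⟨fun hx t ⟨hpal, _, htS⟩ hinf => htS (hx t (isFactor_iff_infix.2 hinf) hpal),
    fun hx y hy hpal => ?_⟩
  by_contra hyS
  rw [isFactor_iff_infix] at hy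
  by_cases hshort : y.length ≤ ℓ + 2
  · exact hx y ⟨hpal, hshort, hyS⟩ hy
  · obtain ⟨t, ht, hinf, hlen⟩ :=
      (isPal_iff_palindrome.1 hpal).exists_infix_length_between (m := ℓ + 1) (by omega)
    have htS : t ∉ S := fun htS => by have := hℓ t htS; omega
    exact hx t ⟨isPal_iff_palindrome.2 ht, hlen.2, htS⟩ (hinf.trans hy)

theorem CLang_eq_compl_union_and_regular_general {α : Type*} [Fintype α]
    (S : Finset (List α)) (ℓ : ℕ)
    (hℓ : ∀ s ∈ S, s.length ≤ ℓ) :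
    (CLang S : Set (List α)) =
      (⋃ t ∈ {t : List α | IsPal t ∧ t.length ≤ ℓ + 2 ∧ t ∉ S},
        {x : List α | ∃ u v, x = u ++ t ++ v})ᶜ ∧
    Language.IsRegular (CLang S) := by
  rw [cLang_eq_avoiding S hℓ]
  exact ⟨avoiding_eq_compl_iUnion _, Language.isRegular_avoiding fun t ht => ht.2.1⟩

/-- For a finite set `S` of palindromes over a finite alphabet, with `ℓ` bounding the
lengths of words of `S`, the language `C_Σ(S)` equals the complement of the union over
palindromes `t ∉ S` of length `≤ ℓ+2` of `Σ* t Σ*`, and `C_Σ(S)` is regular. -/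
theorem CLang_eq_compl_union_and_regular {α : Type*} [Fintype α] [DecidableEq α]
    (S : Finset (List α)) (hS : ∀ s ∈ S, IsPal s) (ℓ : ℕ)
    (hℓ : ∀ s ∈ S, s.length ≤ ℓ) :
    (CLang S : Set (List α)) =
      (⋃ t ∈ {t : List α | IsPal t ∧ t.length ≤ ℓ + 2 ∧ t ∉ S},
        {x : List α | ∃ u v, x = u ++ t ++ v})ᶜ ∧
    Language.IsRegular (CLang S) :=
  CLang_eq_compl_union_and_regular_general S ℓ hℓ
end

section
/- For any finite alphabet Σ and any ℓ ≥ 0, the language D_ℓ(Σ) of finite words over Σ containing at most ℓ distinct palindromic factors (including the empty word) is regular. -/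
def PalFac {α : Type*} (x : List α) : Set (List α) := {y | IsFactor y x ∧ IsPal y}

/-!
A palindrome of length `m` contains the palindromes of lengths `m - 2, m - 4, …` obtained by
deleting letters at both ends, so a word with at most `ℓ` palindromic factors has none longer
than `2ℓ`. Hence whether `x ++ z` still has at most `ℓ` palindromic factors depends on `x` only
through its set of palindromic factors and its last `2ℓ + 2` letters: a palindromic factor of
`x ++ z` either lies inside `x`, inside `z`, or straddles the border within those letters, and
a longer one would contain a straddling one of length `2ℓ + 1` or `2ℓ + 2`. These data range
over a finite set, so the language has finitely many left quotients (Myhill–Nerode).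
-/

theorem Set.Finite.image_of_factor {α β γ : Type*} {f : α → β} {g : α → γ} {s : Set α}
    (hg : (g '' s).Finite) (hfg : ∀ x ∈ s, ∀ y ∈ s, g x = g y → f x = f y) :
    (f '' s).Finite := by
  refine (hg.biUnion fun c _ => Set.Subsingleton.finite (s := f '' (s ∩ g ⁻¹' {c})) ?_).subset ?_
  · rintro _ ⟨x, ⟨hx, hxc⟩, rfl⟩ _ ⟨y, ⟨hy, hyc⟩, rfl⟩
    exact hfg x hx y hy (hxc.trans hyc.symm)
  · rintro _ ⟨x, hx, rfl⟩
    exact Set.mem_biUnion (Set.mem_image_of_mem g hx) ⟨x, ⟨hx, rfl⟩, rfl⟩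

theorem List.Palindrome.exists_infix_length_eq {α : Type*} {p : List α} (hp : p.Palindrome) :
    ∀ i, 2 * i ≤ p.length → ∃ q, q <:+: p ∧ q.Palindrome ∧ q.length = p.length - 2 * i := by
  induction hp with
  | nil => exact fun i _ => ⟨[], List.infix_rfl, .nil, by simp⟩
  | singleton a => exact fun i hi => ⟨[a], List.infix_rfl, .singleton a, by simp at hi ⊢; omega⟩
  | cons_concat a hl ih =>
    rintro (_ | i) hi
    · exact ⟨_, List.infix_rfl, .cons_concat a hl, rfl⟩
    · simp only [List.length_cons, List.length_append, List.length_nil] at hi ⊢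
      obtain ⟨q, hq, hqpal, hqlen⟩ := ih i (by omega)
      exact ⟨q, hq.trans ⟨[a], [a], by simp⟩, hqpal, by omega⟩

section PalFac

variable {α : Type*} {ℓ : ℕ} {p w x y z : List α}

theorem mem_palFac_iff : p ∈ PalFac w ↔ p <:+: w ∧ p.Palindrome := by
  rw [List.Palindrome.iff_reverse_eq]
  exact and_congr_left' ⟨fun ⟨u, v, h⟩ => ⟨u, v, h.symm⟩, fun ⟨u, v, h⟩ => ⟨u, v, h.symm⟩⟩

theorem palFac_finite (w : List α) : (PalFac w).Finite :=
  w.sublists.finite_toSet.subset fun _ hp =>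
    List.mem_sublists.mpr (mem_palFac_iff.mp hp).1.sublist

theorem palFac_mono (h : x <:+: w) : PalFac x ⊆ PalFac w := fun _ hp =>
  mem_palFac_iff.mpr ⟨(mem_palFac_iff.mp hp).1.trans h, (mem_palFac_iff.mp hp).2⟩

theorem ncard_palFac_le_append (x z : List α) :
    (PalFac x).ncard ≤ (PalFac (x ++ z)).ncard :=
  Set.ncard_le_ncard (palFac_mono List.infix_append_left) (palFac_finite _)

theorem lt_ncard_palFac_of_mem (hp : p ∈ PalFac w) {n : ℕ} (hn : 2 * n < p.length) :
    n < (PalFac w).ncard := by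
  obtain ⟨hpw, hpal⟩ := mem_palFac_iff.mp hp
  have hlengths : (fun i => p.length - 2 * i) '' ↑(Finset.range (n + 1)) ⊆
      List.length '' PalFac w := by
    rintro _ ⟨i, hi, rfl⟩
    obtain ⟨q, hqp, hq, hqlen⟩ := hpal.exists_infix_length_eq i (by simp at hi; omega)
    exact ⟨q, mem_palFac_iff.mpr ⟨hqp.trans hpw, hq⟩, hqlen⟩
  have hinj : Set.InjOn (fun i => p.length - 2 * i) ↑(Finset.range (n + 1)) := by
    intro i hi j hj hij
    simp only [Finset.coe_range, Set.mem_Iio] at hi hj hij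
    omega
  calc n < (Finset.range (n + 1)).card := by simp
    _ = ((fun i => p.length - 2 * i) '' ↑(Finset.range (n + 1))).ncard := by
      rw [hinj.ncard_image, Set.ncard_coe_finset]
    _ ≤ (List.length '' PalFac w).ncard :=
      Set.ncard_le_ncard hlengths ((palFac_finite w).image _)
    _ ≤ (PalFac w).ncard := Set.ncard_image_le (palFac_finite w)

theorem length_le_of_mem_palFac (hw : (PalFac w).ncard ≤ ℓ) (hp : p ∈ PalFac w) :
    p.length ≤ 2 * ℓ := by
  by_contra! h
  exact (lt_ncard_palFac_of_mem hp h).not_ge hw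

theorem mem_palFac_append_of_rtake_eq {K : ℕ} (hxy : PalFac y ⊆ PalFac x)
    (hK : y.rtake K = x.rtake K) (hp : p ∈ PalFac (y ++ z)) (hpK : p.length ≤ K) :
    p ∈ PalFac (x ++ z) := by
  obtain ⟨hpyz, hpal⟩ := mem_palFac_iff.mp hp
  refine mem_palFac_iff.mpr ⟨?_, hpal⟩
  rcases List.infix_append_iff.mp hpyz with hpy | hpz | ⟨s, t, rfl, hs, ht⟩
  · exact (mem_palFac_iff.mp (hxy (mem_palFac_iff.mpr ⟨hpy, hpal⟩))).1.trans
      List.infix_append_left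
  · exact hpz.trans List.infix_append_right
  · have hsK : s <:+ y.rtake K :=
      List.suffix_of_suffix_length_le hs (List.drop_suffix _ _) (by
        simp only [List.rtake, List.length_drop, List.length_append] at hpK ⊢
        have := hs.length_le
        omega)
    obtain ⟨u, hu⟩ := hK ▸ hsK |>.trans (List.drop_suffix _ _)
    obtain ⟨v, hv⟩ := ht
    exact ⟨u, v, by rw [← hv, ← hu]; simp⟩

theorem ncard_palFac_append_le_of_rtake_eq (hxy : PalFac y ⊆ PalFac x)
    (hK : y.rtake (2 * ℓ + 2) = x.rtake (2 * ℓ + 2)) (hx : (PalFac (x ++ z)).ncard ≤ ℓ) :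
    (PalFac (y ++ z)).ncard ≤ ℓ := by
  have hsub : PalFac (y ++ z) ⊆ PalFac (x ++ z) := by
    intro p hp
    rcases le_or_gt p.length (2 * ℓ + 2) with hpK | hpK
    · exact mem_palFac_append_of_rtake_eq hxy hK hp hpK
    obtain ⟨hpyz, hpal⟩ := mem_palFac_iff.mp hp
    obtain ⟨q, hqp, hq, hqlen⟩ :=
      hpal.exists_infix_length_eq ((p.length - (2 * ℓ + 1)) / 2) (by omega)
    have hqx := mem_palFac_append_of_rtake_eq hxy hK
      (mem_palFac_iff.mpr ⟨hqp.trans hpyz, hq⟩) (by omega)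
    exact absurd (length_le_of_mem_palFac hx hqx) (by omega)
  exact (Set.ncard_le_ncard hsub (palFac_finite _)).trans hx

end PalFac

/-- The language of words over a finite alphabet containing at most `ℓ` distinct
palindromic factors (including the empty word) is regular. -/
theorem D_regular {α : Type*} [Fintype α] (ℓ : ℕ) :
    Language.IsRegular ({x : List α | (PalFac x).ncard ≤ ℓ} : Language α) := by
  set L : Language α := {x | (PalFac x).ncard ≤ ℓ}
  refine Language.IsRegular.of_finite_range_leftQuotient ?_
  have hdead : ∀ x ∉ L, L.leftQuotient x = 0 := fun x hx =>
    Set.eq_empty_of_forall_notMem fun z hz => hx ((ncard_palFac_le_append x z).trans hz)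
  have hlive : ∀ x ∈ L, ∀ y ∈ L,
      (PalFac x, x.rtake (2 * ℓ + 2)) = (PalFac y, y.rtake (2 * ℓ + 2)) →
        L.leftQuotient x = L.leftQuotient y := by
    intro x _ y _ hxy
    obtain ⟨hP, hK⟩ := Prod.ext_iff.mp hxy
    ext z
    exact ⟨ncard_palFac_append_le_of_rtake_eq hP.ge hK.symm,
      ncard_palFac_append_le_of_rtake_eq hP.le hK⟩
  have hstates : ((fun x => (PalFac x, x.rtake (2 * ℓ + 2))) '' L).Finite := by
    refine ((List.finite_length_le α (2 * ℓ)).finite_subsets.prod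
      (List.finite_length_le α (2 * ℓ + 2))).subset ?_
    rintro _ ⟨x, hx, rfl⟩
    refine ⟨fun p hp => length_le_of_mem_palFac hx hp, ?_⟩
    simp only [Set.mem_ofPred_eq, List.rtake, List.length_drop]
    omega
  refine ((hstates.image_of_factor hlive).insert 0).subset ?_
  rintro _ ⟨x, rfl⟩
  by_cases hx : x ∈ L
  · exact Or.inr ⟨x, hx, rfl⟩
  · exact Or.inl (hdead x hx)
end

section
/- The infinite periodic binary word (001011)^ω contains exactly 9 distinct palindromic factors (including the empty word), namely the palindromic factors appearing in some (equivalently, every sufficiently long) finite prefix. -/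
def InfFactor {α : Type*} (u : List α) (x : ℕ → α) : Prop :=
  ∃ i, u = (List.range u.length).map (fun j => x (i + j))

/-- The periodic infinite binary word `(001011)^ω`. -/
def xword : ℕ → Fin 2 := fun n => ![0, 0, 1, 0, 1, 1] ⟨n % 6, Nat.mod_lt _ (by norm_num)⟩

/-! A palindrome of length `n + 2` has a palindromic central factor of length `n`, and
`(001011)^ω` has no palindromic factor of length 5 or 6, so all its palindromic factors have length
at most 4. By periodicity every factor already occurs at one of the first six positions, which
leaves finitely many candidates to inspect. -/

instance {α : Type*} [DecidableEq α] : DecidablePred (IsPal : List α → Prop) :=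
  fun u => inferInstanceAs (Decidable (u.reverse = u))

theorem IsPal.tail_dropLast {α : Type*} {u : List α} (h : IsPal u) : IsPal u.tail.dropLast := by
  rw [IsPal, ← List.tail_reverse, ← List.dropLast_reverse, h, List.tail_dropLast]

section Factor

variable {α : Type*} (x : ℕ → α)

def factorAt (i n : ℕ) : List α := (List.range n).map fun j => x (i + j)

theorem infFactor_iff_exists_factorAt {u : List α} :
    InfFactor u x ↔ ∃ i, u = factorAt x i u.length :=
  Iff.rfl

@[simp]
theorem length_factorAt (i n : ℕ) : (factorAt x i n).length = n := by
  simp [factorAt]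

theorem tail_dropLast_factorAt (i n : ℕ) :
    (factorAt x i (n + 2)).tail.dropLast = factorAt x (i + 1) n := by
  refine List.ext_getElem (by simp) fun j _ _ => ?_
  simp [factorAt, Nat.add_assoc, Nat.add_comm 1]

variable {x}

theorem factorAt_mod {p : ℕ} (hx : Function.Periodic x p) (i n : ℕ) :
    factorAt x (i % p) n = factorAt x i n := by
  refine List.map_congr_left fun j _ => ?_
  rw [← hx.map_mod_nat, Nat.mod_add_mod, hx.map_mod_nat]

theorem not_isPal_factorAt_of_le {m : ℕ} (hm : ∀ i, ¬IsPal (factorAt x i m))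
    (hm' : ∀ i, ¬IsPal (factorAt x i (m + 1))) {n : ℕ} (hn : m ≤ n) (i : ℕ) :
    ¬IsPal (factorAt x i n) := by
  induction n using Nat.strong_induction_on generalizing i with
  | _ n ih =>
    obtain rfl | rfl | hn : n = m ∨ n = m + 1 ∨ m + 2 ≤ n := by omega
    · exact hm i
    · exact hm' i
    · obtain ⟨k, rfl⟩ : ∃ k, n = k + 2 := ⟨n - 2, by omega⟩
      intro h
      exact ih k (by omega) (by omega) (i + 1) (tail_dropLast_factorAt x i k ▸ h.tail_dropLast)

theorem setOf_infFactor_isPal_eq_of_periodic [DecidableEq α] {p m : ℕ}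
    (hx : Function.Periodic x p) (hp : 0 < p)
    (hm : ∀ i n, m ≤ n → ¬IsPal (factorAt x i n)) :
    {u | InfFactor u x ∧ IsPal u} =
      ↑(((Finset.range p ×ˢ Finset.range m).image fun q => factorAt x q.1 q.2).filter IsPal) := by
  ext u
  simp only [infFactor_iff_exists_factorAt, Set.mem_ofPred_eq, Finset.coe_filter,
    Finset.mem_image, Finset.mem_product, Finset.mem_range, Prod.exists]
  constructor
  · rintro ⟨⟨i, hi⟩, hu⟩
    refine ⟨⟨i % p, u.length, ⟨Nat.mod_lt i hp, ?_⟩, by rw [factorAt_mod hx, ← hi]⟩, hu⟩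
    by_contra! hlen
    exact hm i _ hlen (hi ▸ hu)
  · rintro ⟨⟨i, n, -, rfl⟩, hu⟩
    exact ⟨⟨i, by rw [length_factorAt]⟩, hu⟩

end Factor

theorem xword_periodic : Function.Periodic xword 6 := by
  intro n
  simp [xword]

theorem not_isPal_factorAt_xword {n : ℕ} (hn : 5 ≤ n) (i : ℕ) : ¬IsPal (factorAt xword i n) := by
  have key : ∀ m ∈ ({5, 6} : Finset ℕ), ∀ i < 6, ¬IsPal (factorAt xword i m) := by decide
  refine not_isPal_factorAt_of_le (fun i => ?_) (fun i => ?_) hn i <;>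
    rw [← factorAt_mod xword_periodic] <;>
    exact key _ (by simp) _ (Nat.mod_lt i (by norm_num))

/-- `(001011)^ω` has exactly 9 distinct palindromic factors (including the empty word). -/
theorem periodic_word_nine_palindromes :
    {u : List (Fin 2) | InfFactor u xword ∧ IsPal u}.ncard = 9 := by
  rw [setOf_infFactor_isPal_eq_of_periodic xword_periodic (by norm_num)
    (fun i _ hn => not_isPal_factorAt_xword hn i), Set.ncard_coe_finset]
  -- ε, 0, 1, 00, 11, 010, 101, 0110, 1001
  decide
end

section
/- Define G₀ = 001101000110 and G_{n+1} = G_n · 01 · G_n^R. Then for every n, G_n is a prefix of G_{n+1}, so the limit word G_∞ exists; moreover G_∞ is aperiodic (not ultimately periodic). -/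
/-!
Write `L = |G n|`. The limit word `x` reads `G n`, then `01`, then `G n` reversed, so
`x j = x i` whenever `i < L` and `i + j = 2L + 1`. Reflections about centres going to infinity
turn an ultimately periodic word into a purely periodic one. Composing the reflections at
levels `n` and `n + 1` shows that `x (m + 2L + 4) = x m` for `m < L`; once `L` exceeds the
period this makes `x` globally `(2L + 4)`-periodic, contradicting `x L = 0` and
`x (3L + 4) = x (L + 1) = 1`.
-/

/-- `G 0 = 001101000110`, `G (n+1) = G n ++ 01 ++ (G n)^R`. -/
def G : ℕ → List (Fin 2)
  | 0 => [0, 0, 1, 1, 0, 1, 0, 0, 0, 1, 1, 0]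
  | n + 1 => G n ++ [0, 1] ++ (G n).reverse

namespace Function.Periodic

variable {α : Type*} {x : ℕ → α}

theorem of_eventually_of_reflections {p N : ℕ} (hper : ∀ m, N ≤ m → x (m + p) = x m)
    (hrefl : ∀ B, ∃ c, B ≤ c ∧ ∀ i j, i < B → i + j = c → x j = x i) : Periodic x p := by
  intro m
  obtain ⟨c, hBc, hc⟩ := hrefl (N + m + p + 1)
  calc x (m + p) = x (c - (m + p)) := (hc _ _ (by omega) (by omega)).symm
    _ = x (c - (m + p) + p) := (hper _ (by omega)).symm
    _ = x m := hc _ _ (by omega) (by omega)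

theorem periodic_of_forall_lt {p d L : ℕ} (hx : Periodic x p) (hp : 0 < p) (hpL : p ≤ L)
    (hd : ∀ m < L, x (m + d) = x m) : Periodic x d := by
  intro m
  have hmod : m % p < L := (Nat.mod_lt m hp).trans_le hpL
  calc x (m + d) = x (m % p + d + m / p * p) := by
        conv_lhs => rw [← Nat.mod_add_div' m p]
        ring_nf
    _ = x (m % p) := by rw [← hd _ hmod]; simpa using hx.nat_mul (m / p) (m % p + d)
    _ = x m := hx.map_mod_nat m

end Function.Periodic

theorem G_succ_eq (n : ℕ) : G (n + 1) = G n ++ [0, 1] ++ (G n).reverse := rfl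

theorem length_G_succ (n : ℕ) : (G (n + 1)).length = 2 * (G n).length + 2 := by
  simp only [G_succ_eq, List.length_append, List.length_reverse, List.length_cons,
    List.length_nil]
  omega

theorem lt_length_G (n : ℕ) : n < (G n).length := by
  induction n with
  | zero => simp [G]
  | succ n ih => rw [length_G_succ]; omega

section LimitWord

variable {x : ℕ → Fin 2} (hx : ∀ n, (List.range (G n).length).map x = G n)
include hx

theorem apply_eq_getElem_G {n i : ℕ} (hi : i < (G n).length) : x i = (G n)[i] := by
  have h := List.getElem_of_eq (hx n) (by simpa using hi)
  rwa [List.getElem_map, List.getElem_range] at h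

theorem apply_length_G (n : ℕ) : x (G n).length = 0 := by
  rw [apply_eq_getElem_G hx (n := n + 1) (by rw [length_G_succ]; omega)]
  simp [G_succ_eq, List.getElem_append_right]

theorem apply_length_G_add_one (n : ℕ) : x ((G n).length + 1) = 1 := by
  rw [apply_eq_getElem_G hx (n := n + 1) (by rw [length_G_succ]; omega)]
  simp [G_succ_eq, List.getElem_append_right]

theorem apply_eq_of_add_eq (n : ℕ) {i j : ℕ} (hi : i < (G n).length)
    (hij : i + j = 2 * (G n).length + 1) : x j = x i := by
  rw [apply_eq_getElem_G hx (n := n + 1) (by rw [length_G_succ]; omega),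
    apply_eq_getElem_G hx hi]
  have hlen : (G n ++ [0, 1]).length = (G n).length + 2 := by simp
  simp only [G_succ_eq]
  rw [List.getElem_append_right (by omega), List.getElem_reverse]
  congr 1
  omega

theorem exists_reflection_ge (B : ℕ) :
    ∃ c, B ≤ c ∧ ∀ i j, i < B → i + j = c → x j = x i :=
  ⟨2 * (G B).length + 1, by have := lt_length_G B; omega,
    fun _ _ hi hij => apply_eq_of_add_eq hx B (hi.trans (lt_length_G B)) hij⟩

theorem apply_add_eq_of_lt_length_G (n : ℕ) {m : ℕ} (hm : m < (G n).length) :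
    x (m + (2 * (G n).length + 4)) = x m := by
  have hL := length_G_succ n
  calc x (m + (2 * (G n).length + 4)) = x (2 * (G n).length + 1 - m) :=
        apply_eq_of_add_eq hx (n + 1) (by omega) (by omega)
    _ = x m := apply_eq_of_add_eq hx n hm (by omega)

theorem not_periodic_two_mul_length_G_add_four (n : ℕ) :
    ¬ Function.Periodic x (2 * (G n).length + 4) := by
  intro h
  have hL := length_G_succ n
  have h1 : x ((G n).length + (2 * (G n).length + 4)) = 1 :=
    (apply_eq_of_add_eq hx (n + 1) (by omega) (by omega)).trans (apply_length_G_add_one hx n)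
  rw [h, apply_length_G hx] at h1
  exact zero_ne_one h1

end LimitWord

/-- Each `G n` is a prefix of `G (n+1)`, so the limit word `G_∞` exists; moreover any
infinite word having every `G n` as a prefix is aperiodic (not ultimately periodic). -/
theorem G_prefix_and_aperiodic :
    (∀ n, G n <+: G (n + 1)) ∧
    (∀ x : ℕ → Fin 2,
      (∀ n, (List.range (G n).length).map x = G n) →
      ¬ ∃ p, 1 ≤ p ∧ ∃ N, ∀ m, N ≤ m → x (m + p) = x m) := by
  refine ⟨fun n => (List.prefix_append _ _).trans (List.prefix_append _ _), ?_⟩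
  rintro x hx ⟨p, hp, N, hper⟩
  have hx_p : Function.Periodic x p := .of_eventually_of_reflections hper (exists_reflection_ge hx)
  exact not_periodic_two_mul_length_G_add_four hx p <| hx_p.periodic_of_forall_lt hp
    (lt_length_G p).le fun m hm => apply_add_eq_of_lt_length_G hx p hm
end

section
/- Define G₀ = 001101000110 and G_{n+1} = G_n · 01 · G_n^R. The infinite word G_∞ = lim G_n is uniformly recurrent: for every factor u of G_∞ there exists N such that every factor of G_∞ of length N contains u as a factor. -/
/-!
A block `G n` or `(G n)ᴿ` of `G (n + m)` starts at every multiple of `|G n| + 2`, with two-letter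
words in between: this survives the step `w ↦ w ++ 01 ++ wᴿ` because `|G n| + 2` divides
`|G (n + m)| + 2`. Since `G (n + 1)` and its reversal both begin with `G n`, every factor of `G_∞`
of length `2 (|G (n + 1)| + 2)` contains `G n`; and every factor of `G_∞` lies in some prefix `G n`.
-/

namespace GUniformlyRecurrent

section Lists

variable {α : Type*}

theorem isFactor_iff_isInfix {y w : List α} : IsFactor y w ↔ y <:+: w :=
  ⟨fun ⟨s, t, h⟩ => ⟨s, t, h.symm⟩, fun ⟨s, t, h⟩ => ⟨s, t, h.symm⟩⟩

theorem take_drop_reverse (w : List α) {d q l : ℕ} (h : d + q + l = w.length) :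
    (w.reverse.drop q).take l = ((w.drop d).take l).reverse := by
  rw [List.drop_reverse, List.take_reverse, List.length_take, List.drop_take,
    Nat.min_eq_left (by omega), show w.length - q - l = d by omega,
    show w.length - q - d = l by omega]

/-- `w` reads `B₀ s₀ B₁ s₁ ⋯` with `Bᵢ ∈ {P, Pᴿ}` and `|sᵢ| = 2`, as far as whole blocks fit. -/
def AlignedBlocks (P w : List α) : Prop :=
  ∀ k, k * (P.length + 2) + P.length ≤ w.length →
    (w.drop (k * (P.length + 2))).take P.length = P ∨
      (w.drop (k * (P.length + 2))).take P.length = P.reverse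

theorem alignedBlocks_self (P : List α) : AlignedBlocks P P := by
  intro k hk
  left
  rw [show k * (P.length + 2) = 0 by nlinarith, List.drop_zero, List.take_length]

theorem AlignedBlocks.reverse {P w : List α} (h : AlignedBlocks P w)
    (hw : P.length + 2 ∣ w.length + 2) : AlignedBlocks P w.reverse := by
  obtain ⟨c, hc⟩ := hw
  rw [mul_comm] at hc
  intro k hk
  rw [List.length_reverse] at hk
  have hkc : k < c := by
    by_contra! hck
    have := Nat.mul_le_mul_right (P.length + 2) hck
    omega
  obtain ⟨j, rfl⟩ : ∃ j, c = k + 1 + j := ⟨c - k - 1, by omega⟩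
  have hsplit : j * (P.length + 2) + k * (P.length + 2) + P.length = w.length := by
    have : (k + 1 + j) * (P.length + 2) =
        k * (P.length + 2) + (P.length + 2) + j * (P.length + 2) := by ring
    omega
  rw [take_drop_reverse w hsplit]
  rcases h j (by omega) with hj | hj <;> rw [hj] <;> simp

theorem AlignedBlocks.append {P w w' : List α} (h : AlignedBlocks P w) (h' : AlignedBlocks P w')
    (hw : P.length + 2 ∣ w.length + 2) (s : List α) (hs : s.length = 2) :
    AlignedBlocks P (w ++ s ++ w') := by
  obtain ⟨c, hc⟩ := hw
  rw [mul_comm] at hc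
  intro k hk
  simp only [List.length_append, hs] at hk
  by_cases hkw : k * (P.length + 2) + P.length ≤ w.length
  · rw [List.append_assoc, List.drop_append_of_le_length (by omega),
      List.take_append_of_le_length (by simp only [List.length_drop]; omega)]
    exact h k hkw
  · have hck : c ≤ k := by
      by_contra! hkc
      have := Nat.mul_le_mul_right (P.length + 2) (Nat.succ_le_of_lt hkc)
      rw [Nat.succ_mul] at this
      omega
    obtain ⟨j, rfl⟩ : ∃ j, k = c + j := ⟨k - c, by omega⟩
    have hpos : (c + j) * (P.length + 2) = (w ++ s).length + j * (P.length + 2) := by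
      rw [List.length_append, hs, add_mul, ← hc]
    rw [hpos] at hk ⊢
    rw [List.drop_length_add_append]
    exact h' j (by simp only [List.length_append, hs] at hk; omega)

def window (x : ℕ → α) (i l : ℕ) : List α := (List.range l).map fun j => x (i + j)

@[simp]
theorem length_window (x : ℕ → α) (i l : ℕ) : (window x i l).length = l := by
  simp [window]

theorem window_append (x : ℕ → α) (i a b : ℕ) :
    window x i a ++ window x (i + a) b = window x i (a + b) := by
  simp [window, List.range_add, Function.comp_def, Nat.add_assoc]

theorem window_isInfix_window (x : ℕ → α) {i j l m : ℕ} (hij : i ≤ j) (hjl : j + l ≤ i + m) :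
    window x j l <:+: window x i m := by
  obtain ⟨a, rfl⟩ : ∃ a, j = i + a := ⟨j - i, by omega⟩
  obtain ⟨b, rfl⟩ : ∃ b, m = a + l + b := ⟨m - a - l, by omega⟩
  refine ⟨window x i a, window x (i + a + l) b, ?_⟩
  rw [window_append, add_assoc i a l, window_append]

theorem window_eq_take_drop {x : ℕ → α} {w : List α} (hw : (List.range w.length).map x = w)
    {p l : ℕ} (h : p + l ≤ w.length) : window x p l = (w.drop p).take l := by
  apply List.ext_getElem
  · simp only [length_window, List.length_take, List.length_drop]; omega
  · intro j hj _
    rw [length_window] at hj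
    simp only [window, List.getElem_map, List.getElem_range, List.getElem_take,
      List.getElem_drop]
    rw [List.getElem_of_eq hw.symm (by omega)]
    simp

end Lists

theorem length_G_succ_add_two (n : ℕ) :
    (G (n + 1)).length + 2 = 2 * ((G n).length + 2) := by
  simp only [G, List.length_append, List.length_reverse, List.length_cons, List.length_nil]
  ring

theorem le_length_G (n : ℕ) : n ≤ (G n).length := by
  induction n with
  | zero => simp
  | succ n ih => have := length_G_succ_add_two n; omega

theorem length_G_add_two_dvd (n m : ℕ) : (G n).length + 2 ∣ (G (n + m)).length + 2 := by
  induction m with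
  | zero => rfl
  | succ m ih => rw [← add_assoc, length_G_succ_add_two]; exact ih.mul_left 2

theorem alignedBlocks_G (n m : ℕ) : AlignedBlocks (G n) (G (n + m)) := by
  induction m with
  | zero => exact alignedBlocks_self _
  | succ m ih =>
    have hdvd := length_G_add_two_dvd n m
    exact ih.append (ih.reverse hdvd) hdvd [0, 1] rfl

theorem G_isPrefix_G_succ (n : ℕ) : G n <+: G (n + 1) := by
  rw [G, List.append_assoc]
  exact List.prefix_append _ _

theorem G_isPrefix_reverse_G_succ (n : ℕ) : G n <+: (G (n + 1)).reverse := by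
  rw [G]
  simp only [List.reverse_append, List.reverse_reverse, List.append_assoc]
  exact List.prefix_append _ _

section InfiniteWord

variable {x : ℕ → Fin 2} (hx : ∀ n, (List.range (G n).length).map x = G n)
include hx

theorem window_aligned_G (n k : ℕ) :
    window x (k * ((G n).length + 2)) (G n).length = G n ∨
      window x (k * ((G n).length + 2)) (G n).length = (G n).reverse := by
  set m := k * ((G n).length + 2) + (G n).length
  have hm : m ≤ (G (n + m)).length := (le_length_G _).trans' (by omega)
  rw [window_eq_take_drop (hx (n + m)) hm]
  exact alignedBlocks_G n m k hm

theorem G_isInfix_window (n i : ℕ) :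
    G n <:+: window x i (2 * ((G (n + 1)).length + 2)) := by
  set L := (G (n + 1)).length
  set k := i / (L + 2) + 1
  have hk : k * (L + 2) = (L + 2) * (i / (L + 2)) + (L + 2) := by ring
  have hdiv := Nat.div_add_mod i (L + 2)
  have hmod := Nat.mod_lt i (show L + 2 > 0 by omega)
  have hblock : window x (k * (L + 2)) L <:+: window x i (2 * (L + 2)) :=
    window_isInfix_window x (by omega) (by omega)
  refine List.IsInfix.trans ?_ hblock
  rcases window_aligned_G hx (n + 1) k with h | h <;> rw [h]
  · exact (G_isPrefix_G_succ n).isInfix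
  · exact (G_isPrefix_reverse_G_succ n).isInfix

theorem exists_isInfix_G {u : List (Fin 2)} (hu : InfFactor u x) : ∃ n, u <:+: G n := by
  obtain ⟨i, hu⟩ := hu
  refine ⟨i + u.length, ?_⟩
  have hwin : u = ((G (i + u.length)).drop i).take u.length :=
    hu.trans (window_eq_take_drop (hx _) (le_length_G _))
  nth_rw 1 [hwin]
  exact (List.take_prefix _ _).isInfix.trans (List.drop_suffix _ _).isInfix

end InfiniteWord

end GUniformlyRecurrent

open GUniformlyRecurrent in
/-- The limit word `G_∞` (the infinite word having every `G n` as a prefix) is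
uniformly recurrent: every factor `u` occurs in every sufficiently long factor. -/
theorem G_uniformly_recurrent (x : ℕ → Fin 2)
    (hx : ∀ n, (List.range (G n).length).map x = G n) :
    ∀ u : List (Fin 2), InfFactor u x →
      ∃ N, ∀ v : List (Fin 2), InfFactor v x → v.length = N → IsFactor u v := by
  intro u hu
  obtain ⟨n, hun⟩ := exists_isInfix_G hx hu
  refine ⟨2 * ((G (n + 1)).length + 2), fun v ⟨i, hv⟩ hlen => ?_⟩
  rw [hlen] at hv
  rw [isFactor_iff_isInfix, hv]
  exact hun.trans (G_isInfix_window hx n i)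
end

section
/- Let h : {0,1}* → Σ* be a morphism defined by two noncommuting nonempty words h(0) = x₀ and h(1) = x₁ (i.e., x₀x₁ ≠ x₁x₀). If the infinite binary word w is aperiodic, then the infinite word h(w) is aperiodic. -/
/-!
Two noncommuting words `u, v` form an ω-code: if `u s = v t` with `s, t ∈ {u, v}^ω` and
`|u| ≤ |v|`, then `v = u t₀`, and peeling one more factor off `s` yields the same situation for
the shorter pair `(u, t₀)`; by induction on `|u| + |v|` this forces `uv = vu`.

If `h(w)` were ultimately periodic it would have only finitely many suffixes, so two cut points
`n < m` of the factorization `h(w(0)) h(w(1)) ⋯` would carry the same suffix. Decoding that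
suffix uniquely gives `w(n + k) = w(m + k)` for all `k`, so `w` would be ultimately periodic.
-/

/-- An infinite word is aperiodic if it is not ultimately periodic. -/
def Aperiodic' {α : Type*} (x : ℕ → α) : Prop :=
  ¬ ∃ p, 1 ≤ p ∧ ∃ N, ∀ m, N ≤ m → x (m + p) = x m

namespace Stream'

variable {S : Type*}

theorem take_eq_map_range (n : ℕ) (s : Stream' S) : s.take n = (List.range n).map s.get := by
  apply List.ext_getElem <;> simp

theorem exists_eq_append_of_append_stream_eq {u v : List S} {s t : Stream' S}
    (h : u ++ₛ s = v ++ₛ t) (hle : u.length ≤ v.length) :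
    ∃ t₀, v = u ++ t₀ ∧ s = t₀ ++ₛ t := by
  have hv : v ++ₛ t = v.take u.length ++ₛ (v.drop u.length ++ₛ t) := by
    rw [← append_append_stream, List.take_append_drop]
  rw [hv] at h
  have hu : v.take u.length = u :=
    (append_left_injective _ _ _ _ h (by simp [Nat.min_eq_left hle])).symm
  rw [hu] at h
  refine ⟨v.drop u.length, ?_, append_right_injective _ _ _ h⟩
  calc v = v.take u.length ++ v.drop u.length := (List.take_append_drop _ _).symm
    _ = u ++ v.drop u.length := by rw [hu]

/-- The ω-power `X^ω`, defined coinductively. -/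
def omegaPow (X : Set (List S)) : Set (Stream' S) :=
  {s | ∃ P : Set (Stream' S), s ∈ P ∧ ∀ r ∈ P, ∃ x ∈ X, ∃ r' ∈ P, r = x ++ₛ r'}

variable {X : Set (List S)}

theorem subset_omegaPow {P : Set (Stream' S)}
    (hP : ∀ r ∈ P, ∃ x ∈ X, ∃ r' ∈ P, r = x ++ₛ r') : P ⊆ omegaPow X :=
  fun _ hs => ⟨P, hs, hP⟩

theorem mem_omegaPow_iff {s : Stream' S} :
    s ∈ omegaPow X ↔ ∃ x ∈ X, ∃ r ∈ omegaPow X, s = x ++ₛ r := by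
  constructor
  · rintro ⟨P, hs, hP⟩
    obtain ⟨x, hx, r, hr, rfl⟩ := hP s hs
    exact ⟨x, hx, r, ⟨P, hr, hP⟩, rfl⟩
  · rintro ⟨x, hx, r, ⟨P, hr, hP⟩, rfl⟩
    refine subset_omegaPow (P := insert (x ++ₛ r) P) ?_ (Set.mem_insert _ _)
    rintro q (rfl | hq)
    · exact ⟨x, hx, r, Set.mem_insert_of_mem _ hr, rfl⟩
    · obtain ⟨x', hx', r', hr', rfl⟩ := hP q hq
      exact ⟨x', hx', r', Set.mem_insert_of_mem _ hr', rfl⟩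

theorem append_stream_mem_omegaPow {x : List S} {s : Stream' S} (hx : x ∈ X)
    (hs : s ∈ omegaPow X) : x ++ₛ s ∈ omegaPow X :=
  mem_omegaPow_iff.2 ⟨x, hx, s, hs, rfl⟩

theorem omegaPow_pair_append_subset (u t : List S) :
    omegaPow {u, u ++ t} ⊆ omegaPow {u, t} := by
  refine fun s hs => subset_omegaPow
    (P := omegaPow {u, u ++ t} ∪ (t ++ₛ ·) '' omegaPow {u, u ++ t}) ?_ (Or.inl hs)
  rintro r (hr | ⟨r, hr, rfl⟩)
  · obtain ⟨x, hx | hx, r', hr', rfl⟩ := mem_omegaPow_iff.1 hr <;> subst x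
    · exact ⟨u, by simp, r', Or.inl hr', rfl⟩
    · exact ⟨u, by simp, t ++ₛ r', Or.inr ⟨r', hr', rfl⟩, by simp⟩
  · exact ⟨t, by simp, r, Or.inl hr, rfl⟩

theorem append_comm_of_append_stream_eq {u v : List S} {s t : Stream' S}
    (hs : s ∈ omegaPow {u, v}) (ht : t ∈ omegaPow {u, v}) (h : u ++ₛ s = v ++ₛ t) :
    u ++ v = v ++ u := by
  induction hn : u.length + v.length using Nat.strong_induction_on generalizing u v s t with
  | _ n ih =>
  wlog hle : u.length ≤ v.length generalizing u v s t
  · rw [Set.pair_comm] at hs ht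
    exact (this ht hs h.symm (by omega) (by omega)).symm
  obtain ⟨t₀, rfl, rfl⟩ := exists_eq_append_of_append_stream_eq h hle
  by_cases hu : u = []
  · simp [hu]
  obtain ⟨s', hs', hs's⟩ : ∃ s' ∈ omegaPow {u, t₀}, t₀ ++ₛ t = u ++ₛ s' := by
    obtain ⟨x, hx | hx, r, hr, hsr⟩ := mem_omegaPow_iff.1 hs <;> subst x
    · exact ⟨r, omegaPow_pair_append_subset u t₀ hr, hsr⟩
    · refine ⟨t₀ ++ₛ r, append_stream_mem_omegaPow (by simp)
        (omegaPow_pair_append_subset u t₀ hr), by simpa using hsr⟩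
  have hcomm : u ++ t₀ = t₀ ++ u := by
    refine ih _ ?_ hs' (omegaPow_pair_append_subset u t₀ ht) hs's.symm rfl
    have := List.length_pos_iff.2 hu
    simp only [← hn, List.length_append]
    omega
  calc u ++ (u ++ t₀) = u ++ (t₀ ++ u) := by rw [hcomm]
    _ = u ++ t₀ ++ u := (List.append_assoc _ _ _).symm

theorem eq_and_eq_of_append_stream_eq {u v x x' : List S} {s t : Stream' S}
    (huv : u ++ v ≠ v ++ u) (hx : x ∈ ({u, v} : Set (List S)))
    (hx' : x' ∈ ({u, v} : Set (List S))) (hs : s ∈ omegaPow {u, v})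
    (ht : t ∈ omegaPow {u, v}) (h : x ++ₛ s = x' ++ₛ t) : x = x' ∧ s = t := by
  obtain rfl : x = x' := by
    rcases hx with rfl | rfl <;> rcases hx' with rfl | rfl
    · rfl
    · exact absurd (append_comm_of_append_stream_eq hs ht h) huv
    · exact absurd (append_comm_of_append_stream_eq ht hs h.symm) huv
    · rfl
  exact ⟨rfl, append_right_injective _ _ _ h⟩

theorem finite_range_drop_of_not_aperiodic {y : Stream' S} (hy : ¬ Aperiodic' y) :
    (Set.range fun k => y.drop k).Finite := by
  obtain ⟨p, hp, N, hper⟩ := not_not.1 hy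
  have hdrop : ∀ k, N ≤ k → y.drop (k + p) = y.drop k := fun k hk => by
    ext i
    simp only [get_drop]
    rw [show k + p + i = k + i + p by omega]
    exact hper _ (by omega)
  have hsmall : ∀ k, ∃ j < N + p, y.drop j = y.drop k := by
    intro k
    induction k using Nat.strong_induction_on with
    | _ k ih =>
      by_cases hk : k < N + p
      · exact ⟨k, hk, rfl⟩
      · obtain ⟨j, hj, e⟩ := ih (k - p) (by omega)
        refine ⟨j, hj, ?_⟩
        rw [e, ← hdrop (k - p) (by omega), Nat.sub_add_cancel (by omega)]
  refine ((Set.finite_Iio (N + p)).image fun k => y.drop k).subset ?_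
  rintro _ ⟨k, rfl⟩
  exact hsmall k

def cutPoint (c : ℕ → List S) (n : ℕ) : ℕ := ((List.range n).flatMap c).length

section Concatenation

variable {c : ℕ → List S} {y : Stream' S}
  (hy : ∀ n, y.take (cutPoint c n) = (List.range n).flatMap c)
include hy

theorem drop_cutPoint (n : ℕ) :
    y.drop (cutPoint c n) = c n ++ₛ y.drop (cutPoint c (n + 1)) := by
  have split : ∀ l : List S, y.take l.length = l → y = l ++ₛ y.drop l.length :=
    fun l hl => by conv_lhs => rw [← append_take_drop l.length y, hl]
  have hsucc : (List.range (n + 1)).flatMap c = (List.range n).flatMap c ++ c n := by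
    simp [List.range_succ]
  have hn := split _ (hy n)
  have hn1 := split _ (hy (n + 1))
  rw [hsucc, append_append_stream] at hn1
  unfold cutPoint
  rw [hsucc]
  exact append_right_injective _ _ _ (hn.symm.trans hn1)

theorem drop_cutPoint_mem_omegaPow (hc : ∀ n, c n ∈ X) (n : ℕ) :
    y.drop (cutPoint c n) ∈ omegaPow X := by
  refine subset_omegaPow (P := Set.range fun n => y.drop (cutPoint c n)) ?_ ⟨n, rfl⟩
  rintro _ ⟨n, rfl⟩
  exact ⟨c n, hc n, _, ⟨n + 1, rfl⟩, drop_cutPoint hy n⟩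

theorem add_eq_add_of_drop_cutPoint_eq {u v : List S} (huv : u ++ v ≠ v ++ u)
    (hc : ∀ n, c n ∈ ({u, v} : Set (List S))) {n m : ℕ}
    (h : y.drop (cutPoint c n) = y.drop (cutPoint c m)) (k : ℕ) : c (n + k) = c (m + k) := by
  have decode : ∀ a b, y.drop (cutPoint c a) = y.drop (cutPoint c b) →
      c a = c b ∧ y.drop (cutPoint c (a + 1)) = y.drop (cutPoint c (b + 1)) := by
    intro a b hab
    rw [drop_cutPoint hy a, drop_cutPoint hy b] at hab
    exact eq_and_eq_of_append_stream_eq huv (hc a) (hc b)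
      (drop_cutPoint_mem_omegaPow hy hc _) (drop_cutPoint_mem_omegaPow hy hc _) hab
  have hsuf : ∀ k, y.drop (cutPoint c (n + k)) = y.drop (cutPoint c (m + k)) := by
    intro k
    induction k with
    | zero => exact h
    | succ k ih => exact (decode _ _ ih).2
  exact (decode _ _ (hsuf k)).1

end Concatenation

end Stream'

theorem not_aperiodic_of_forall_add_eq {α : Type*} {w : ℕ → α} {n m : ℕ} (hnm : n < m)
    (h : ∀ k, w (n + k) = w (m + k)) : ¬ Aperiodic' w := by
  refine fun hw => hw ⟨m - n, by omega, n, fun j hj => ?_⟩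
  have := h (j - n)
  rw [show n + (j - n) = j by omega, show m + (j - n) = j + (m - n) by omega] at this
  exact this.symm

theorem image_aperiodic_general {S : Type*} (x₀ x₁ : List S)
    (hcomm : x₀ ++ x₁ ≠ x₁ ++ x₀)
    (w : ℕ → Fin 2) (hw : Aperiodic' w)
    (y : ℕ → S)
    (hy : ∀ n,
      (List.range ((List.range n).flatMap (fun i => if w i = 0 then x₀ else x₁)).length).map y
        = (List.range n).flatMap (fun i => if w i = 0 then x₀ else x₁)) :
    Aperiodic' y := by
  by_contra hper
  set h : Fin 2 → List S := fun a => if a = 0 then x₀ else x₁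
  have hmem : ∀ i, h (w i) ∈ ({x₀, x₁} : Set (List S)) := fun i => by
    by_cases hi : w i = 0 <;> simp [h, hi]
  have hinj : Function.Injective h := by
    have hne : x₀ ≠ x₁ := fun e => hcomm (e ▸ rfl)
    intro a b hab
    fin_cases a <;> fin_cases b <;> simp_all [h]
  have hy' : ∀ n, Stream'.take (Stream'.cutPoint (h ∘ w) n) y = (List.range n).flatMap (h ∘ w) :=
    fun n => (Stream'.take_eq_map_range _ _).trans (hy n)
  obtain ⟨n, m, hnm, hsuf⟩ :=
    (Stream'.finite_range_drop_of_not_aperiodic hper).exists_lt_map_eq_of_forall_mem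
      (f := fun n => Stream'.drop (Stream'.cutPoint (h ∘ w) n) y) fun n => Set.mem_range_self _
  exact not_aperiodic_of_forall_add_eq hnm (fun k =>
    hinj (Stream'.add_eq_add_of_drop_cutPoint_eq hy' hcomm hmem hsuf k)) hw

/-- If `h(0) = x₀` and `h(1) = x₁` are nonempty noncommuting words and the infinite
binary word `w` is aperiodic, then `h(w)` is aperiodic.  Here `y` is the infinite
word `h(w)`, characterized by having every `h(w(0)) ⋯ h(w(n-1))` as a prefix. -/
theorem image_aperiodic {S : Type*} (x₀ x₁ : List S)
    (h₀ : x₀ ≠ []) (h₁ : x₁ ≠ []) (hcomm : x₀ ++ x₁ ≠ x₁ ++ x₀)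
    (w : ℕ → Fin 2) (hw : Aperiodic' w)
    (y : ℕ → S)
    (hy : ∀ n,
      (List.range ((List.range n).flatMap (fun i => if w i = 0 then x₀ else x₁)).length).map y
        = (List.range n).flatMap (fun i => if w i = 0 then x₀ else x₁)) :
    Aperiodic' y :=
  image_aperiodic_general x₀ x₁ hcomm w hw y hy
end

section
/- Let e(n) denote the number of words of length n over {0,1,2} containing no palindromic factor of length greater than 2. Then e(n) = 6·F(n+1) for all n ≥ 3, where F denotes the Fibonacci sequence with F(0) = 0, F(1) = 1. -/
namespace List

variable {α : Type*}

def NoLongPalindromes (w : List α) : Prop :=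
  ∀ u, u <:+: w → u.Palindrome → u.length ≤ 2

theorem isFactor_iff_isInfix {u w : List α} : IsFactor u w ↔ u <:+: w :=
  ⟨fun ⟨s, t, h⟩ => ⟨s, t, h.symm⟩, fun ⟨s, t, h⟩ => ⟨s, t, h.symm⟩⟩

theorem isPal_iff_palindrome {u : List α} : IsPal u ↔ u.Palindrome :=
  Palindrome.iff_reverse_eq.symm

instance [DecidableEq α] : DecidablePred (NoLongPalindromes (α := α)) := fun w =>
  decidable_of_iff (∀ u ∈ w.sublists, u <:+: w → u.Palindrome → u.length ≤ 2)
    ⟨fun h u hu => h u (mem_sublists.2 hu.sublist) hu, fun h u _ => h u⟩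

theorem noLongPalindromes_cons_iff {a : α} {w : List α} :
    (a :: w).NoLongPalindromes ↔
      w.NoLongPalindromes ∧ ∀ u, u <+: a :: w → u.Palindrome → u.length ≤ 2 := by
  simp only [NoLongPalindromes, infix_cons_iff, or_imp, forall_and]
  exact and_comm

theorem Palindrome.length_le_four_of_prefix_cons {p w : List α} {a : α} (hp : p.Palindrome)
    (hpw : p <+: a :: w) (hw : w.NoLongPalindromes) : p.length ≤ 4 := by
  cases hp with
  | nil => simp
  | singleton => simp
  | cons_concat x hm =>
    have hmw : _ <+: w := (prefix_append _ [x]).trans (cons_prefix_cons.1 hpw).2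
    have := hw _ hmw.isInfix hm
    simp only [length_cons, length_append, length_nil]
    omega

theorem noLongPalindromes_cons_cons_cons_cons_iff {a b c d : α} {r : List α} :
    (a :: b :: c :: d :: r).NoLongPalindromes ↔
      (b :: c :: d :: r).NoLongPalindromes ∧ a ≠ c ∧ ¬(b = c ∧ a = d) := by
  rw [noLongPalindromes_cons_iff]
  refine and_congr_right fun hw => ⟨fun h => ⟨?_, ?_⟩, fun ⟨hac, hbcd⟩ u hu hp => ?_⟩
  · rintro rfl
    simpa using h [a, b, a] (by simp) (Palindrome.of_reverse_eq rfl)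
  · rintro ⟨rfl, rfl⟩
    simpa using h [a, b, b, a] (by simp) (Palindrome.of_reverse_eq rfl)
  · have hle := hp.length_le_four_of_prefix_cons hu hw
    rw [prefix_iff_eq_take] at hu
    by_contra! hlong
    obtain h3 | h4 : u.length = 3 ∨ u.length = 4 := by omega
    · rw [h3] at hu
      subst hu
      obtain ⟨-, hac'⟩ : c = a ∧ a = c := by simpa using hp.reverse_eq
      exact hac hac'
    · rw [h4] at hu
      subst hu
      obtain ⟨-, -, hbc, had⟩ : d = a ∧ c = b ∧ b = c ∧ a = d := by simpa using hp.reverse_eq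
      exact hbcd ⟨hbc, had⟩

theorem exists_eq_cons_cons_cons {v : List α} (h : 3 ≤ v.length) :
    ∃ b c d r, v = b :: c :: d :: r := by
  rcases v with _ | ⟨b, _ | ⟨c, _ | ⟨d, r⟩⟩⟩ <;> simp at h
  exact ⟨b, c, d, r, rfl⟩

theorem NoLongPalindromes.existsUnique_cons {v : List (Fin 3)} (hv : v.NoLongPalindromes)
    (hlen : 3 ≤ v.length) : ∃! a, v[0]? ≠ some a ∧ (a :: v).NoLongPalindromes := by
  obtain ⟨b, c, d, r, rfl⟩ := exists_eq_cons_cons_cons hlen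
  have hbd : b ≠ d := by
    rintro rfl
    simpa using hv [b, c, b] ⟨[], r, rfl⟩ (Palindrome.of_reverse_eq rfl)
  simp only [noLongPalindromes_cons_cons_cons_cons_iff, hv, true_and, getElem?_cons_zero,
    ne_eq, Option.some.injEq]
  -- `a` must avoid `b` and `c`, or `b` and `d` when `b = c`
  have key : ∀ b c d : Fin 3, b ≠ d → ∃! a, ¬b = a ∧ a ≠ c ∧ ¬(b = c ∧ a = d) := by
    unfold ExistsUnique; decide
  exact key b c d hbd

variable (α) in
def noLongPalindromeWords (n : ℕ) : Set (List α) :=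
  {w | w.length = n ∧ w.NoLongPalindromes}

theorem finite_noLongPalindromeWords [Finite α] (n : ℕ) :
    (noLongPalindromeWords α n).Finite :=
  (finite_length_eq α n).subset fun _ hw => hw.1

theorem ncard_noLongPalindromeWords_eq_card_filter [Fintype α] [DecidableEq α] (n : ℕ) :
    (noLongPalindromeWords α n).ncard =
      (Finset.univ.filter fun f : Fin n → α => (ofFn f).NoLongPalindromes).card := by
  have h : noLongPalindromeWords α n = ofFn '' {f : Fin n → α | (ofFn f).NoLongPalindromes} := by
    ext w
    constructor
    · rintro ⟨rfl, hw⟩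
      exact ⟨fun i => w[i], by simpa using hw, ofFn_getElem⟩
    · rintro ⟨f, hf, rfl⟩
      exact ⟨length_ofFn, hf⟩
  rw [h, Set.ncard_image_of_injective _ ofFn_injective, ← Set.ncard_coe_finset]
  simp

theorem ncard_noLongPalindromeWords_sdiff {n : ℕ} (hn : 3 ≤ n) :
    (noLongPalindromeWords (Fin 3) (n + 1) \ {w | w[0]? = w[1]?}).ncard =
      (noLongPalindromeWords (Fin 3) n).ncard := by
  refine Set.ncard_congr (fun w _ => w.tail) ?_ ?_ ?_
  · rintro w ⟨⟨hlen, hw⟩, -⟩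
    obtain ⟨a, v, rfl⟩ := exists_cons_of_length_eq_add_one hlen
    exact ⟨by simpa using hlen, (noLongPalindromes_cons_iff.1 hw).1⟩
  · rintro w w' ⟨⟨hlen, hw⟩, hne⟩ ⟨⟨hlen', hw'⟩, hne'⟩ htail
    obtain ⟨a, v, rfl⟩ := exists_cons_of_length_eq_add_one hlen
    obtain ⟨a', v', rfl⟩ := exists_cons_of_length_eq_add_one hlen'
    obtain rfl : v = v' := htail
    have hv := (noLongPalindromes_cons_iff.1 hw).1
    rw [(hv.existsUnique_cons (by simp at hlen; omega)).unique ⟨by simpa [eq_comm] using hne, hw⟩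
      ⟨by simpa [eq_comm] using hne', hw'⟩]
  · rintro v ⟨hlen, hv⟩
    obtain ⟨a, ⟨hne, ha⟩, -⟩ := hv.existsUnique_cons (hlen ▸ hn)
    exact ⟨a :: v, ⟨⟨by simpa using hlen, ha⟩, by simpa [eq_comm] using hne⟩, rfl⟩

theorem ncard_noLongPalindromeWords_inter {n : ℕ} (hn : 3 ≤ n) :
    (noLongPalindromeWords α (n + 1) ∩ {w | w[0]? = w[1]?}).ncard =
      (noLongPalindromeWords α n \ {w | w[0]? = w[1]?}).ncard := by
  refine Set.ncard_congr (fun w _ => w.tail) ?_ ?_ ?_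
  · rintro w ⟨⟨hlen, hw⟩, hrep⟩
    obtain ⟨a, v, rfl⟩ := exists_cons_of_length_eq_add_one hlen
    obtain ⟨b, c, d, r, rfl⟩ := exists_eq_cons_cons_cons (by simp at hlen; omega : 3 ≤ v.length)
    obtain rfl : a = b := by simpa [eq_comm] using hrep
    rw [noLongPalindromes_cons_cons_cons_cons_iff] at hw
    exact ⟨⟨by simpa using hlen, hw.1⟩, by simpa using hw.2.1⟩
  · rintro w w' ⟨⟨hlen, -⟩, hrep⟩ ⟨⟨hlen', -⟩, hrep'⟩ htail
    obtain ⟨a, v, rfl⟩ := exists_cons_of_length_eq_add_one hlen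
    obtain ⟨a', v', rfl⟩ := exists_cons_of_length_eq_add_one hlen'
    obtain rfl : v = v' := htail
    simp only [Set.mem_ofPred_eq, getElem?_cons_zero, getElem?_cons_succ] at hrep hrep'
    simpa [← hrep'] using hrep
  · rintro v ⟨⟨hlen, hv⟩, hne⟩
    obtain ⟨b, c, d, r, rfl⟩ := exists_eq_cons_cons_cons (hlen ▸ hn)
    have hbc : b ≠ c := by simpa using hne
    refine ⟨b :: b :: c :: d :: r, ⟨⟨by simpa using hlen, ?_⟩, by simp⟩, rfl⟩
    rw [noLongPalindromes_cons_cons_cons_cons_iff]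
    exact ⟨hv, hbc, fun h => hbc h.1⟩

theorem ncard_noLongPalindromeWords_add_two {n : ℕ} (hn : 3 ≤ n) :
    (noLongPalindromeWords (Fin 3) (n + 2)).ncard =
      (noLongPalindromeWords (Fin 3) (n + 1)).ncard + (noLongPalindromeWords (Fin 3) n).ncard := by
  rw [← Set.ncard_inter_add_ncard_sdiff_eq_ncard _ {w | w[0]? = w[1]?}
      (finite_noLongPalindromeWords _), ncard_noLongPalindromeWords_inter (by omega),
    ncard_noLongPalindromeWords_sdiff hn, ncard_noLongPalindromeWords_sdiff (by omega), add_comm]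

theorem ncard_noLongPalindromeWords_fin_three :
    ∀ n, 3 ≤ n → (noLongPalindromeWords (Fin 3) n).ncard = 6 * Nat.fib (n + 1)
  | 3, _ => by rw [ncard_noLongPalindromeWords_eq_card_filter]; decide
  | 4, _ => by rw [ncard_noLongPalindromeWords_eq_card_filter]; decide
  | n + 5, _ => by
    rw [ncard_noLongPalindromeWords_add_two (by omega),
      ncard_noLongPalindromeWords_fin_three (n + 4) (by omega),
      ncard_noLongPalindromeWords_fin_three (n + 3) (by omega), Nat.fib_add_two (n := n + 4)]
    ring

end List

/-- The number of ternary words of length `n` with no palindromic factor of length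
greater than 2 equals `6·F(n+1)` for `n ≥ 3`, where `F` is the Fibonacci sequence. -/
theorem count_ternary_no_long_palindrome (n : ℕ) (hn : 3 ≤ n) :
    {w : List (Fin 3) | w.length = n ∧
      ∀ u, IsFactor u w → IsPal u → u.length ≤ 2}.ncard = 6 * Nat.fib (n + 1) := by
  simp only [List.isFactor_iff_isInfix, List.isPal_iff_palindrome]
  exact List.ncard_noLongPalindromeWords_fin_three n hn
end
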